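/- For every real number x ≠ 0, 2·cosh(x) − (cosh x)⁻¹ − (cosh x)⁻³ − 3x · b₋₃(x) > 0, where b₋₃(x) = (1/2)[arctan(sinh x) + sinh(x)·(cosh x)⁻²]. -/

import Mathlib

open Real

noncomputable def bm3 (x : ℝ) : ℝ :=
  (1 / 2) * (Real.arctan (Real.sinh x) + Real.sinh x * (Real.cosh x)⁻¹ ^ 2)

/-!
The left-hand side `g` is even and vanishes at `0` together with `g'`. With `s = sinh x` and
`c = cosh x`, using `b₋₃' = c⁻³` and `s² = c² - 1` one finds
`c⁵ g'' = 9 s (x c - s) + s⁴ (2 c² + 3)`, which is positive for `x > 0` because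
`sinh x < x cosh x`. Hence `g'` and then `g` are positive on `(0, ∞)`.
-/

lemma lt_of_hasDerivAt_pos {f f' : ℝ → ℝ} {a x : ℝ} (hf : ∀ y, HasDerivAt f (f' y) y)
    (hf' : ∀ y, a < y → 0 < f' y) (hx : a < x) : f a < f x := by
  refine strictMonoOn_of_hasDerivWithinAt_pos (convex_Ici a)
    (fun y _ => (hf y).continuousAt.continuousWithinAt)
    (fun y _ => (hf y).hasDerivWithinAt) (fun y hy => hf' y ?_) Set.self_mem_Ici hx.le hx
  rwa [interior_Ici] at hy

lemma sinh_lt_mul_cosh {x : ℝ} (hx : 0 < x) : sinh x < x * cosh x := by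
  have hderiv (y : ℝ) : HasDerivAt (fun y => y * cosh y - sinh y) (y * sinh y) y := by
    refine (((hasDerivAt_id y).mul (hasDerivAt_cosh y)).sub (hasDerivAt_sinh y)).congr_deriv ?_
    simp
  have := lt_of_hasDerivAt_pos hderiv (fun y hy => mul_pos hy (sinh_pos_iff.mpr hy)) hx
  simp only [zero_mul, sinh_zero, sub_zero] at this
  linarith

lemma bm3_zero : bm3 0 = 0 := by simp [bm3]

lemma bm3_neg (x : ℝ) : bm3 (-x) = -bm3 x := by
  simp only [bm3, sinh_neg, cosh_neg, arctan_neg]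
  ring

lemma hasDerivAt_bm3 (x : ℝ) : HasDerivAt bm3 ((cosh x)⁻¹ ^ 3) x := by
  have hc := (cosh_pos x).ne'
  have hinv : HasDerivAt (fun y => (cosh y)⁻¹) (-sinh x / cosh x ^ 2) x :=
    (hasDerivAt_cosh x).inv hc
  refine ((((hasDerivAt_sinh x).arctan).add
    ((hasDerivAt_sinh x).mul (hinv.pow 2))).const_mul (1 / 2 : ℝ)).congr_deriv ?_
  norm_num
  rw [← cosh_sq']
  field_simp
  linear_combination (-2 : ℝ) * sinh_sq x

noncomputable def bm3Gap (x : ℝ) : ℝ :=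
  2 * cosh x - (cosh x)⁻¹ - (cosh x)⁻¹ ^ 3 - 3 * x * bm3 x

noncomputable def bm3GapDeriv (x : ℝ) : ℝ :=
  2 * sinh x + sinh x / cosh x ^ 2 + 3 * sinh x / cosh x ^ 4 - 3 * bm3 x - 3 * x / cosh x ^ 3

lemma bm3Gap_neg (x : ℝ) : bm3Gap (-x) = bm3Gap x := by
  simp only [bm3Gap, cosh_neg, bm3_neg]
  ring

lemma hasDerivAt_bm3Gap (x : ℝ) : HasDerivAt bm3Gap (bm3GapDeriv x) x := by
  have hc := (cosh_pos x).ne'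
  have hinv : HasDerivAt (fun y => (cosh y)⁻¹) (-sinh x / cosh x ^ 2) x :=
    (hasDerivAt_cosh x).inv hc
  refine (((((hasDerivAt_cosh x).const_mul 2).sub hinv).sub (hinv.pow 3)).sub
    (((hasDerivAt_id x).const_mul 3).mul (hasDerivAt_bm3 x))).congr_deriv ?_
  norm_num [bm3GapDeriv]
  field_simp
  ring

lemma hasDerivAt_bm3GapDeriv (x : ℝ) :
    HasDerivAt bm3GapDeriv
      ((9 * sinh x * (x * cosh x - sinh x) + sinh x ^ 4 * (2 * cosh x ^ 2 + 3)) / cosh x ^ 5) x := by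
  have hc := (cosh_pos x).ne'
  have hdiv (k : ℕ) {u : ℝ → ℝ} {u' : ℝ} (hu : HasDerivAt u u' x) :=
    hu.div ((hasDerivAt_cosh x).pow k) (pow_ne_zero k hc)
  refine ((((((hasDerivAt_sinh x).const_mul 2).add (hdiv 2 (hasDerivAt_sinh x))).add
    (hdiv 4 ((hasDerivAt_sinh x).const_mul 3))).sub ((hasDerivAt_bm3 x).const_mul 3)).sub
    (hdiv 3 ((hasDerivAt_id x).const_mul 3))).congr_deriv ?_
  simp only [id_eq, Pi.pow_apply]
  field_simp
  linear_combination -(3 * cosh x ^ 3 + 2 * cosh x ^ 5) * (sinh x ^ 2 + cosh x ^ 2) * sinh_sq x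

lemma bm3GapDeriv_pos {x : ℝ} (hx : 0 < x) : 0 < bm3GapDeriv x := by
  have hpos {y : ℝ} (hy : 0 < y) :
      0 < (9 * sinh y * (y * cosh y - sinh y) + sinh y ^ 4 * (2 * cosh y ^ 2 + 3)) / cosh y ^ 5 := by
    have := sinh_pos_iff.mpr hy
    have := sub_pos.mpr (sinh_lt_mul_cosh hy)
    have := cosh_pos y
    positivity
  have h0 : bm3GapDeriv 0 = 0 := by simp [bm3GapDeriv, bm3_zero]
  simpa [h0] using lt_of_hasDerivAt_pos hasDerivAt_bm3GapDeriv (fun _ => hpos) hx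

lemma bm3Gap_pos {x : ℝ} (hx : 0 < x) : 0 < bm3Gap x := by
  have h0 : bm3Gap 0 = 0 := by norm_num [bm3Gap, bm3_zero]
  simpa [h0] using lt_of_hasDerivAt_pos hasDerivAt_bm3Gap (fun _ => bm3GapDeriv_pos) hx

theorem stmt_1 (x : ℝ) (hx : x ≠ 0) :
    2 * Real.cosh x - (Real.cosh x)⁻¹ - (Real.cosh x)⁻¹ ^ 3 - 3 * x * bm3 x > 0 := by
  change 0 < bm3Gap x
  rcases hx.lt_or_gt with hneg | hpos
  · simpa [bm3Gap_neg] using bm3Gap_pos (neg_pos.mpr hneg)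
  · exact bm3Gap_pos hpos
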